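/- Let P : ℝ² → ℝ be a submetry (equivalently, a surjective map with dist(P(x), t) = dist(x, P⁻¹(t)) for all x, t). Then each fiber P⁻¹(t) is a closed convex subset of ℝ² that is nowhere dense (has empty interior). -/

import Mathlib

/-! A submetry is 1-Lipschitz, and from any point each fibre lies at exactly the distance between
the two values. Let `x, y` lie over `t` and `p = a • x + b • y` over a value at distance `δ > 0`
from `t`. Far out along the ray from `t` through `P p`, at `s = t + k • (P p - t)`, some `z` over
`s` lies within about `(k - 1) δ` of `p`, yet at distance `≥ k δ` from both `x` and `y`; the identity
`‖z - p‖² = a ‖z - x‖² + b ‖z - y‖² - a b ‖x - y‖²` makes this impossible for large `k`.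
Likewise a ball inside a fibre would have to meet the nearby fibres. -/

open Metric

theorem dist_smul_add_smul_sq {E : Type*} [NormedAddCommGroup E] [InnerProductSpace ℝ E]
    (z x y : E) {a b : ℝ} (hab : a + b = 1) :
    dist z (a • x + b • y) ^ 2 = a * dist z x ^ 2 + b * dist z y ^ 2 - a * b * dist x y ^ 2 := by
  obtain rfl : b = 1 - a := by linarith
  have hz : z - (a • x + (1 - a) • y) = a • (z - x) + (1 - a) • (z - y) := by module
  have hxy : x - y = (z - y) - (z - x) := by abel
  rw [dist_eq_norm, dist_eq_norm, dist_eq_norm, dist_eq_norm, hz, hxy]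
  generalize z - x = u, z - y = w
  rw [norm_add_sq_real, norm_sub_sq_real, norm_smul, norm_smul, real_inner_smul_left,
    real_inner_smul_right, Real.norm_eq_abs, Real.norm_eq_abs, mul_pow, mul_pow, sq_abs, sq_abs,
    real_inner_comm]
  ring

def IsSubmetry {X Y : Type*} [PseudoMetricSpace X] [PseudoMetricSpace Y] (P : X → Y) : Prop :=
  ∀ x y, dist (P x) y = infDist x (P ⁻¹' {y})

namespace IsSubmetry

variable {X Y : Type*} [PseudoMetricSpace X]

theorem lipschitzWith [PseudoMetricSpace Y] {P : X → Y} (hP : IsSubmetry P) : LipschitzWith 1 P :=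
  .mk_one fun x y => (hP x (P y)).trans_le (infDist_le_dist_of_mem rfl)

theorem surjective [MetricSpace Y] [Nonempty X] {P : X → Y} (hP : IsSubmetry P) :
    Function.Surjective P := by
  intro y
  by_contra! hy
  have hempty : P ⁻¹' {y} = ∅ := Set.eq_empty_of_forall_notMem hy
  obtain ⟨x⟩ := ‹Nonempty X›
  exact hy x (dist_eq_zero.1 <| by rw [hP x y, hempty, infDist_empty])

theorem exists_apply_eq_dist_lt [MetricSpace Y] [Nonempty X] {P : X → Y} (hP : IsSubmetry P)
    {x : X} {y : Y} {c : ℝ} (hc : dist (P x) y < c) : ∃ z, P z = y ∧ dist x z < c := by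
  obtain ⟨z, hz⟩ := hP.surjective y
  rw [hP x y] at hc
  exact (infDist_lt_iff ⟨z, hz⟩).1 hc

variable [NormedAddCommGroup Y] [NormedSpace ℝ Y]

theorem convex_preimage_singleton {E : Type*} [NormedAddCommGroup E] [InnerProductSpace ℝ E]
    {P : E → Y} (hP : IsSubmetry P) (t : Y) : Convex ℝ (P ⁻¹' {t}) := by
  intro x (hx : P x = t) y (hy : P y = t) a b ha hb hab
  set p := a • x + b • y
  by_contra hp
  set δ := dist (P p) t
  have hδ : 0 < δ := dist_pos.2 hp
  -- `k δ² = δ² + a b ‖x - y‖²` exceeds the gap `δ² / 4 + a b ‖x - y‖²` left by the bounds below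
  set k := 1 + a * b * dist x y ^ 2 / δ ^ 2
  have hk : 1 ≤ k := le_add_of_nonneg_right (by positivity)
  set s := t + k • (P p - t)
  have hps : dist (P p) s = (k - 1) * δ := by
    rw [dist_eq_norm, show P p - s = (1 - k) • (P p - t) by simp only [s]; module,
      norm_smul, Real.norm_eq_abs, abs_of_nonpos (by linarith), ← dist_eq_norm]
    ring
  obtain ⟨z, hz, hpz⟩ := hP.exists_apply_eq_dist_lt (x := p) (c := (k - 1 / 2) * δ)
    (by rw [hps]; linarith)
  have hfar : ∀ w, P w = t → k * δ ≤ dist z w := fun w hw => by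
    have hzw := hP.lipschitzWith.dist_le_mul z w
    rwa [hz, hw, NNReal.coe_one, one_mul, dist_eq_norm, add_sub_cancel_left, norm_smul,
      Real.norm_eq_abs, abs_of_nonneg (by linarith), ← dist_eq_norm] at hzw
  have hlower : (k * δ) ^ 2 - a * b * dist x y ^ 2 ≤ dist z p ^ 2 := by
    have hzx := pow_le_pow_left₀ (by positivity) (hfar x hx) 2
    have hzy := pow_le_pow_left₀ (by positivity) (hfar y hy) 2
    rw [dist_smul_add_smul_sq z x y hab]
    nlinarith
  have hupper : dist z p ^ 2 < ((k - 1 / 2) * δ) ^ 2 :=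
    pow_lt_pow_left₀ (dist_comm z p ▸ hpz) dist_nonneg two_ne_zero
  have hkδ : k * δ ^ 2 = δ ^ 2 + a * b * dist x y ^ 2 := by
    simp only [k]; field_simp
  nlinarith

theorem interior_preimage_singleton [Nontrivial Y] [Nonempty X] {P : X → Y} (hP : IsSubmetry P)
    (t : Y) : interior (P ⁻¹' {t}) = ∅ := by
  refine Set.eq_empty_of_forall_notMem fun x hx => ?_
  obtain ⟨ε, hε, hball⟩ := isOpen_iff.1 isOpen_interior x hx
  obtain ⟨v, hv⟩ := exists_norm_eq Y (half_pos hε).le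
  have hxt : x ∈ P ⁻¹' {t} := interior_subset hx
  obtain ⟨z, hz, hxz⟩ := hP.exists_apply_eq_dist_lt (x := x) (y := t + v) (c := ε)
    (by rw [hxt, dist_self_add_right, hv]; linarith)
  have hzt : z ∈ P ⁻¹' {t} := interior_subset (hball (mem_ball_comm.1 hxz))
  have hv0 : v = 0 := add_eq_left.1 (hz.symm.trans (hzt : P z = t))
  rw [hv0, norm_zero] at hv
  linarith

end IsSubmetry

theorem submetry_R2_to_R_fibers_general
    (P : EuclideanSpace ℝ (Fin 2) → ℝ)
    (hP : ∀ (x : EuclideanSpace ℝ (Fin 2)) (t : ℝ),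
      dist (P x) t = Metric.infDist x (P ⁻¹' {t}))
    (t : ℝ) :
    IsClosed (P ⁻¹' {t}) ∧ Convex ℝ (P ⁻¹' {t}) ∧ interior (P ⁻¹' {t}) = ∅ :=
  have hP : IsSubmetry P := hP
  ⟨isClosed_singleton.preimage hP.lipschitzWith.continuous, hP.convex_preimage_singleton t,
    hP.interior_preimage_singleton t⟩

/-- Every fiber of a submetry `P : ℝ² → ℝ` is a closed, convex,
nowhere dense subset of the plane. -/
theorem submetry_R2_to_R_fibers
    (P : EuclideanSpace ℝ (Fin 2) → ℝ)
    (hsurj : Function.Surjective P)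
    (hP : ∀ (x : EuclideanSpace ℝ (Fin 2)) (t : ℝ),
      dist (P x) t = Metric.infDist x (P ⁻¹' {t}))
    (t : ℝ) :
    IsClosed (P ⁻¹' {t}) ∧ Convex ℝ (P ⁻¹' {t}) ∧ interior (P ⁻¹' {t}) = ∅ :=
  submetry_R2_to_R_fibers_general P hP t
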